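/- arXiv:2312.11304 — 2 statements merged into one kernel-verified Lean document; each statement's English description precedes it below -/
import Mathlib

section
/- Let H be a Hilbert space, C ⊂ H a closed convex cone, and E : H → [0,∞] a convex lower semicontinuous functional. Fix h > 0 and define the proximal sequence ω_{k+1} = argmin over ω ∈ C of E(ω) + (1/2h)·‖ω − ω_k‖². If ω ∈ C satisfies E(ω) = 0, then the sequence of inner products ⟨ω, ω_k⟩ is monotonically nondecreasing in k. -/
/-!
If `E ω = 0`, then moving the proximal point `ω_{k+1}` along the ray `ω_{k+1} + t ω` (`t ≥ 0`)
stays in the cone and, by subadditivity and homogeneity, does not increase `E`. Minimality of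
`ω_{k+1}` therefore forces `‖ω_{k+1} - ω_k‖ ≤ ‖ω_{k+1} + t ω - ω_k‖` for all `t > 0`, and letting
`t → 0⁺` gives `⟪ω, ω_{k+1} - ω_k⟫ ≥ 0`.
-/

open Filter Topology
open scoped RealInnerProductSpace

theorem Convex.add_mem_of_smul_mem {V : Type*} [AddCommGroup V] [Module ℝ V] {C : Set V}
    (hconv : Convex ℝ C) (hcone : ∀ t : ℝ, 0 ≤ t → ∀ x ∈ C, t • x ∈ C)
    {x y : V} (hx : x ∈ C) (hy : y ∈ C) : x + y ∈ C := by
  have hmid : (1 / 2 : ℝ) • x + (1 / 2 : ℝ) • y ∈ C :=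
    hconv hx hy (by norm_num) (by norm_num) (by norm_num)
  convert hcone 2 zero_le_two _ hmid using 1
  rw [smul_add, smul_smul, smul_smul]
  norm_num

theorem ConvexOn.map_add_le_of_homogeneous {V : Type*} [AddCommGroup V] [Module ℝ V]
    {E : V → ℝ} (hconv : ConvexOn ℝ Set.univ E) (hhom : ∀ t : ℝ, 0 ≤ t → ∀ w, E (t • w) = t * E w)
    (x y : V) : E (x + y) ≤ E x + E y := by
  have hmid := hconv.2 (Set.mem_univ x) (Set.mem_univ y)
    (by norm_num : (0 : ℝ) ≤ 1 / 2) (by norm_num : (0 : ℝ) ≤ 1 / 2) (by norm_num)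
  have hdouble : x + y = (2 : ℝ) • ((1 / 2 : ℝ) • x + (1 / 2 : ℝ) • y) := by
    rw [smul_add, smul_smul, smul_smul]
    norm_num
  rw [hdouble, hhom 2 zero_le_two]
  simp only [smul_eq_mul] at hmid
  linarith

theorem inner_nonneg_of_forall_norm_le_norm_add_smul {F : Type*} [NormedAddCommGroup F]
    [InnerProductSpace ℝ F] {a v : F} (h : ∀ t : ℝ, 0 < t → ‖a‖ ≤ ‖a + t • v‖) :
    0 ≤ ⟪v, a⟫ := by
  have hpos : ∀ t : ℝ, 0 < t → 0 ≤ 2 * ⟪v, a⟫ + t * ‖v‖ ^ 2 := by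
    intro t ht
    have hsq : ‖a‖ ^ 2 ≤ ‖a + t • v‖ ^ 2 := pow_le_pow_left₀ (norm_nonneg a) (h t ht) 2
    rw [norm_add_sq_real, real_inner_smul_right, norm_smul, mul_pow, Real.norm_eq_abs, sq_abs,
      real_inner_comm] at hsq
    nlinarith
  have hlim : Tendsto (fun t : ℝ => 2 * ⟪v, a⟫ + t * ‖v‖ ^ 2) (𝓝[>] 0)
      (𝓝 (2 * ⟪v, a⟫ + 0 * ‖v‖ ^ 2)) :=
    ((continuous_id.mul continuous_const).const_add _).tendsto 0 |>.mono_left nhdsWithin_le_nhds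
  have := ge_of_tendsto hlim (eventually_nhdsWithin_of_forall hpos)
  linarith

theorem inner_sub_nonneg_of_isMinOn_prox {F : Type*} [NormedAddCommGroup F]
    [InnerProductSpace ℝ F] {C : Set F} {E : F → ℝ} {c : ℝ} (hc : 0 < c) {p u ω : F}
    (hmin : IsMinOn (fun w => E w + c * ‖w - p‖ ^ 2) C u)
    (hray : ∀ t : ℝ, 0 < t → u + t • ω ∈ C) (hE : ∀ t : ℝ, 0 < t → E (u + t • ω) ≤ E u) :
    0 ≤ ⟪ω, u - p⟫ := by
  refine inner_nonneg_of_forall_norm_le_norm_add_smul fun t ht => ?_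
  have hle : E u + c * ‖u - p‖ ^ 2 ≤ E (u + t • ω) + c * ‖u + t • ω - p‖ ^ 2 := hmin (hray t ht)
  have hsq : ‖u - p‖ ^ 2 ≤ ‖u - p + t • ω‖ ^ 2 := by
    rw [sub_add_eq_add_sub]
    nlinarith [hE t ht]
  exact (pow_le_pow_iff_left₀ (norm_nonneg _) (norm_nonneg _) two_ne_zero).1 hsq

theorem stmt10_general {H : Type*} [NormedAddCommGroup H] [InnerProductSpace ℝ H]
    (C : Set H) (hCconv : Convex ℝ C)
    (hCcone : ∀ t : ℝ, 0 ≤ t → ∀ x ∈ C, t • x ∈ C)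
    (E : H → ℝ) (hEconv : ConvexOn ℝ Set.univ E)
    (hEhom : ∀ t : ℝ, 0 ≤ t → ∀ w, E (t • w) = t * E w)
    (h : ℝ) (hh : 0 < h)
    (seq : ℕ → H)
    (hseq : ∀ k : ℕ, seq (k + 1) ∈ C ∧
      IsMinOn (fun w => E w + (1 / (2 * h)) * ‖w - seq k‖ ^ 2) C (seq (k + 1)))
    (ω : H) (hω : ω ∈ C) (hEω : E ω = 0) :
    Monotone fun k : ℕ => ⟪ω, seq k⟫ := by
  refine monotone_nat_of_le_succ fun k => ?_
  obtain ⟨hu, hmin⟩ := hseq k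
  have hstep : 0 ≤ ⟪ω, seq (k + 1) - seq k⟫ := by
    refine inner_sub_nonneg_of_isMinOn_prox (by positivity) hmin
      (fun t ht => hCconv.add_mem_of_smul_mem hCcone hu (hCcone t ht.le ω hω)) fun t ht => ?_
    have := hEconv.map_add_le_of_homogeneous hEhom (seq (k + 1)) (t • ω)
    rwa [hEhom t ht.le, hEω, mul_zero, add_zero] at this
  rw [inner_sub_right] at hstep
  linarith

/-- Proximal algorithm on a closed convex cone `C` in a Hilbert space `H`:
if `ω ∈ C` satisfies `E ω = 0`, then `⟪ω, ω_k⟫` is monotonically nondecreasing. -/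
theorem stmt10 {H : Type*} [NormedAddCommGroup H] [InnerProductSpace ℝ H]
    [CompleteSpace H]
    (C : Set H) (hCclosed : IsClosed C) (hCconv : Convex ℝ C)
    (hCcone : ∀ t : ℝ, 0 ≤ t → ∀ x ∈ C, t • x ∈ C)
    (E : H → ℝ) (hE0 : ∀ w, 0 ≤ E w) (hEconv : ConvexOn ℝ Set.univ E)
    (hElsc : LowerSemicontinuous E)
    (hEhom : ∀ t : ℝ, 0 ≤ t → ∀ w, E (t • w) = t * E w)
    (h : ℝ) (hh : 0 < h)
    (seq : ℕ → H) (hseq0 : seq 0 ∈ C)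
    (hseq : ∀ k : ℕ, seq (k + 1) ∈ C ∧
      IsMinOn (fun w => E w + (1 / (2 * h)) * ‖w - seq k‖ ^ 2) C (seq (k + 1)))
    (ω : H) (hω : ω ∈ C) (hEω : E ω = 0) :
    Monotone fun k : ℕ => ⟪ω, seq k⟫ :=
  stmt10_general C hCconv hCcone E hEconv hEhom h hh seq hseq ω hω hEω
end

section
/- Every firmly nonexpansive map T on a Hilbert space with nonempty fixed point set has weakly convergent Picard iterates: for any ω_1, the sequence ω_{k+1} = T(ω_k) converges weakly to some fixed point of T. -/
/-! The iterates `u k` are Fejér monotone with respect to the fixed points: `‖u k - q‖` is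
nonincreasing for every fixed point `q`, so the sequence is bounded and has weak cluster points.
Firm nonexpansiveness gives `‖u k - q‖² - ‖u (k+1) - q‖² ≥ ‖T (u k) - u k‖²`, so the steps tend
to zero, and by demiclosedness of `I - T` every weak cluster point is a fixed point. Opial's
argument concludes: for two such cluster points `p`, `q` the limit of
`‖u k - q‖² - ‖u k - p‖² = 2⟪p - q, u k⟫ + ‖q‖² - ‖p‖²` exists, which forces
`⟪p - q, p⟫ = ⟪p - q, q⟫`, i.e. `p = q`. -/

open scoped RealInnerProductSpace
open Filter Topology Function

section Picard

variable {E : Type*} [SeminormedAddCommGroup E] {T : E → E} {u : ℕ → E} {q : E}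

theorem LipschitzWith.antitone_norm_sub (hT : LipschitzWith 1 T) (hu : ∀ k, u (k + 1) = T (u k))
    (hq : IsFixedPt T q) : Antitone fun k => ‖u k - q‖ :=
  antitone_nat_of_succ_le fun k => by
    simpa [hu k, hq.eq] using hT.norm_sub_le (u k) q

theorem LipschitzWith.norm_le_of_isFixedPt (hT : LipschitzWith 1 T)
    (hu : ∀ k, u (k + 1) = T (u k)) (hq : IsFixedPt T q) (k : ℕ) :
    ‖u k‖ ≤ ‖u 0 - q‖ + ‖q‖ := calc
  ‖u k‖ ≤ ‖u k - q‖ + ‖q‖ := norm_le_norm_sub_add _ _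
  _ ≤ ‖u 0 - q‖ + ‖q‖ := by gcongr; exact hT.antitone_norm_sub hu hq (Nat.zero_le k)

theorem LipschitzWith.exists_tendsto_norm_sub (hT : LipschitzWith 1 T)
    (hu : ∀ k, u (k + 1) = T (u k)) (hq : IsFixedPt T q) :
    ∃ d, Tendsto (fun k => ‖u k - q‖) atTop (𝓝 d) :=
  ⟨_, tendsto_atTop_ciInf (hT.antitone_norm_sub hu hq) ⟨0, by
    rintro _ ⟨k, rfl⟩
    exact norm_nonneg _⟩⟩

end Picard

section InnerProductSpace

variable {H : Type*} [NormedAddCommGroup H] [InnerProductSpace ℝ H]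

def WeakTendsto (u : ℕ → H) (p : H) : Prop :=
  ∀ y, Tendsto (fun k => ⟪y, u k⟫) atTop (𝓝 ⟪y, p⟫)

theorem exists_strictMono_weakTendsto [CompleteSpace H] {u : ℕ → H} {C : ℝ}
    (hu : ∀ k, ‖u k‖ ≤ C) : ∃ φ : ℕ → ℕ, StrictMono φ ∧ ∃ p, WeakTendsto (u ∘ φ) p := by
  set K := (Submodule.span ℝ (Set.range u)).topologicalClosure
  have huK (k : ℕ) : u k ∈ K :=
    Submodule.le_topologicalClosure _ (Submodule.subset_span ⟨k, rfl⟩)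
  have : TopologicalSpace.SeparableSpace K := by
    have := (Set.countable_range u).isSeparable.span (R := ℝ) |>.closure
    rw [← Submodule.topologicalClosure_coe] at this
    exact this.separableSpace
  -- Sequential Banach–Alaoglu on the separable space `K`, applied to the functionals `⟪u k, ·⟫`.
  let f (k : ℕ) : WeakDual ℝ K := StrongDual.toWeakDual (innerSL ℝ ⟨u k, huK k⟩)
  have hf (k : ℕ) : f k ∈ WeakDual.toStrongDual ⁻¹' Metric.closedBall 0 C := by
    change dist (innerSL ℝ (⟨u k, huK k⟩ : K)) 0 ≤ C
    rw [dist_zero_right, innerSL_apply_norm]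
    exact hu k
  obtain ⟨g, -, φ, hφ, hg⟩ := WeakDual.isSeqCompact_closedBall ℝ K 0 C hf
  set p := (InnerProductSpace.toDual ℝ K).symm (WeakDual.toStrongDual g)
  refine ⟨φ, hφ, p, fun y => ?_⟩
  have hlim : g (K.orthogonalProjectionOnto y) = ⟪y, (p : H)⟫ := by
    rw [real_inner_comm, ← Submodule.inner_orthogonalProjectionOnto_eq_of_mem_left,
      InnerProductSpace.toDual_symm_apply]
    rfl
  have := ((WeakDual.eval_continuous (K.orthogonalProjectionOnto y)).tendsto g).comp hg
  simpa [Function.comp_def, f, hlim, real_inner_comm] using this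

theorem eq_of_weakTendsto_of_tendsto_norm_sub {u : ℕ → H} {φ ψ : ℕ → ℕ} {p q : H} {dp dq : ℝ}
    (hφ : Tendsto φ atTop atTop) (hψ : Tendsto ψ atTop atTop)
    (hp : WeakTendsto (u ∘ φ) p) (hq : WeakTendsto (u ∘ ψ) q)
    (hdp : Tendsto (fun k => ‖u k - p‖) atTop (𝓝 dp))
    (hdq : Tendsto (fun k => ‖u k - q‖) atTop (𝓝 dq)) : p = q := by
  have hconv : Tendsto (fun k => ⟪p - q, u k⟫) atTop
      (𝓝 ((dq ^ 2 - dp ^ 2 + (‖p‖ ^ 2 - ‖q‖ ^ 2)) / 2)) := by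
    refine (((hdq.pow 2).sub (hdp.pow 2)).add_const (‖p‖ ^ 2 - ‖q‖ ^ 2) |>.div_const 2).congr
      fun k => ?_
    rw [norm_sub_sq_real, norm_sub_sq_real, inner_sub_left, real_inner_comm p,
      real_inner_comm q]
    ring
  have hpp := tendsto_nhds_unique (hp (p - q)) (hconv.comp hφ)
  have hqq := tendsto_nhds_unique (hq (p - q)) (hconv.comp hψ)
  have : ⟪p - q, p - q⟫ = 0 := by rw [inner_sub_right, hpp, hqq, sub_self]
  exact sub_eq_zero.mp (inner_self_eq_zero.mp this)

theorem exists_mem_weakTendsto_of_tendsto_norm_sub [CompleteSpace H] {u : ℕ → H} {C : ℝ}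
    {F : Set H} (hu : ∀ k, ‖u k‖ ≤ C)
    (hF : ∀ q ∈ F, ∃ d, Tendsto (fun k => ‖u k - q‖) atTop (𝓝 d))
    (hcl : ∀ φ : ℕ → ℕ, Tendsto φ atTop atTop → ∀ p, WeakTendsto (u ∘ φ) p → p ∈ F) :
    ∃ p ∈ F, WeakTendsto u p := by
  obtain ⟨φ, hφ, p, hp⟩ := exists_strictMono_weakTendsto hu
  have hpF := hcl φ hφ.tendsto_atTop p hp
  refine ⟨p, hpF, fun y => tendsto_of_subseq_tendsto fun ns hns => ?_⟩
  obtain ⟨ψ, hψ, q, hq⟩ := exists_strictMono_weakTendsto fun k => hu (ns k)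
  have hnsψ : Tendsto (ns ∘ ψ) atTop atTop := hns.comp hψ.tendsto_atTop
  have hqF := hcl (ns ∘ ψ) hnsψ q hq
  obtain ⟨dp, hdp⟩ := hF p hpF
  obtain ⟨dq, hdq⟩ := hF q hqF
  obtain rfl : p = q :=
    eq_of_weakTendsto_of_tendsto_norm_sub hφ.tendsto_atTop hnsψ hp hq hdp hdq
  exact ⟨ψ, hq y⟩

theorem LipschitzWith.isFixedPt_of_weakTendsto {T : H → H} (hT : LipschitzWith 1 T)
    {x : ℕ → H} {p : H} {C : ℝ} (hx : WeakTendsto x p) (hC : ∀ j, ‖x j‖ ≤ C)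
    (hreg : Tendsto (fun j => ‖T (x j) - x j‖) atTop (𝓝 0)) : IsFixedPt T p := by
  set ε := fun j => ‖T (x j) - x j‖
  -- Expanding `‖x j - T p‖²` around `p` isolates `‖p - T p‖²` plus a weakly vanishing term,
  -- while nonexpansiveness bounds the same quantity by `O(ε j)`.
  have hle (j : ℕ) :
      2 * ⟪p - T p, x j - p⟫ + ‖p - T p‖ ^ 2 ≤ ε j * (ε j + 2 * (C + ‖p‖)) := by
    have htri : ‖x j - T p‖ ≤ ε j + ‖x j - p‖ := calc
      ‖x j - T p‖ ≤ ‖x j - T (x j)‖ + ‖T (x j) - T p‖ := norm_sub_le_norm_sub_add_norm_sub _ _ _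
      _ ≤ ε j + ‖x j - p‖ :=
        add_le_add (norm_sub_rev _ _).le (by simpa using hT.norm_sub_le (x j) p)
    have hbd : ‖x j - p‖ ≤ C + ‖p‖ := (_root_.norm_sub_le _ _).trans (by linarith [hC j])
    have hexp : ‖x j - T p‖ ^ 2 = ‖x j - p‖ ^ 2 + 2 * ⟪p - T p, x j - p⟫ + ‖p - T p‖ ^ 2 := by
      rw [← sub_add_sub_cancel (x j) p (T p), norm_add_sq_real, real_inner_comm]
    have hε : 0 ≤ ε j := norm_nonneg _
    nlinarith [pow_le_pow_left₀ (norm_nonneg _) htri 2, norm_nonneg (x j - p)]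
  have hlhs : Tendsto (fun j => 2 * ⟪p - T p, x j - p⟫ + ‖p - T p‖ ^ 2) atTop
      (𝓝 (‖p - T p‖ ^ 2)) := by
    have := (((hx (p - T p)).sub_const ⟪p - T p, p⟫).const_mul 2).add_const (‖p - T p‖ ^ 2)
    simpa [inner_sub_right] using this
  have hrhs : Tendsto (fun j => ε j * (ε j + 2 * (C + ‖p‖))) atTop (𝓝 0) := by
    simpa using hreg.mul (hreg.add_const (2 * (C + ‖p‖)))
  have : ‖p - T p‖ ^ 2 ≤ 0 := le_of_tendsto_of_tendsto' hlhs hrhs hle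
  exact (sub_eq_zero.mp (norm_eq_zero.mp (by nlinarith [norm_nonneg (p - T p)]))).symm

def FirmlyNonexpansive (T : H → H) : Prop :=
  ∀ x y, ‖T x - T y‖ ^ 2 ≤ ⟪T x - T y, x - y⟫

theorem FirmlyNonexpansive.norm_sq_add_norm_sq_le {T : H → H} (hT : FirmlyNonexpansive T)
    (x y : H) : ‖T x - T y‖ ^ 2 + ‖(x - T x) - (y - T y)‖ ^ 2 ≤ ‖x - y‖ ^ 2 := by
  have hsub : (x - T x) - (y - T y) = (x - y) - (T x - T y) := by abel
  rw [hsub, norm_sub_sq_real (x - y), real_inner_comm]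
  linarith [hT x y]

theorem FirmlyNonexpansive.lipschitzWith {T : H → H} (hT : FirmlyNonexpansive T) :
    LipschitzWith 1 T :=
  LipschitzWith.of_dist_le_mul fun x y => by
    rw [dist_eq_norm, dist_eq_norm, NNReal.coe_one, one_mul]
    exact (pow_le_pow_iff_left₀ (norm_nonneg _) (norm_nonneg _) two_ne_zero).mp
      (le_of_add_le_of_nonneg_left (hT.norm_sq_add_norm_sq_le x y) (sq_nonneg _))

theorem FirmlyNonexpansive.tendsto_norm_map_sub {T : H → H} {u : ℕ → H} {q : H} (hT : FirmlyNonexpansive T)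
    (hu : ∀ k, u (k + 1) = T (u k)) (hq : IsFixedPt T q) :
    Tendsto (fun k => ‖T (u k) - u k‖) atTop (𝓝 0) := by
  obtain ⟨d, hd⟩ := hT.lipschitzWith.exists_tendsto_norm_sub hu hq
  have hstep (k : ℕ) : ‖T (u k) - u k‖ ^ 2 ≤ ‖u k - q‖ ^ 2 - ‖u (k + 1) - q‖ ^ 2 := by
    have := hT.norm_sq_add_norm_sq_le (u k) q
    rw [hq.eq, sub_self, sub_zero, norm_sub_rev (u k)] at this
    rw [hu k]
    linarith
  have hdiff : Tendsto (fun k => ‖u k - q‖ ^ 2 - ‖u (k + 1) - q‖ ^ 2) atTop (𝓝 0) := by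
    simpa using (hd.pow 2).sub ((hd.comp (tendsto_add_atTop_nat 1)).pow 2)
  have hsq := squeeze_zero (fun k => sq_nonneg _) hstep hdiff
  simpa [Real.sqrt_sq (norm_nonneg _)] using hsq.sqrt

end InnerProductSpace

theorem stmt15_general {H : Type*} [NormedAddCommGroup H] [InnerProductSpace ℝ H]
    [CompleteSpace H]
    (T : H → H) (hT : ∀ x y : H, ‖T x - T y‖ ^ 2 ≤ ⟪T x - T y, x - y⟫)
    (hF : ∃ p : H, T p = p)
    (seq : ℕ → H)
    (hseq : ∀ k : ℕ, seq (k + 1) = T (seq k)) :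
    ∃ p : H, T p = p ∧
      ∀ y : H, Filter.Tendsto (fun k => ⟪y, seq k⟫) Filter.atTop (nhds ⟪y, p⟫) := by
  have hT : FirmlyNonexpansive T := hT
  obtain ⟨q, hq⟩ := hF
  have hbd := hT.lipschitzWith.norm_le_of_isFixedPt hseq hq
  exact exists_mem_weakTendsto_of_tendsto_norm_sub (F := fixedPoints T) hbd
    (fun p hp => hT.lipschitzWith.exists_tendsto_norm_sub hseq hp)
    fun φ hφ p hp => hT.lipschitzWith.isFixedPt_of_weakTendsto hp (fun j => hbd (φ j))
      ((hT.tendsto_norm_map_sub hseq hq).comp hφ)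

/-- Picard iterates of a firmly nonexpansive map on a Hilbert space with a fixed point
converge weakly to a fixed point. -/
theorem stmt15 {H : Type*} [NormedAddCommGroup H] [InnerProductSpace ℝ H]
    [CompleteSpace H]
    (T : H → H) (hT : ∀ x y : H, ‖T x - T y‖ ^ 2 ≤ ⟪T x - T y, x - y⟫)
    (hF : ∃ p : H, T p = p)
    (ω₁ : H) (seq : ℕ → H) (hseq0 : seq 0 = ω₁)
    (hseq : ∀ k : ℕ, seq (k + 1) = T (seq k)) :
    ∃ p : H, T p = p ∧
      ∀ y : H, Filter.Tendsto (fun k => ⟪y, seq k⟫) Filter.atTop (nhds ⟪y, p⟫) :=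
  stmt15_general T hT hF seq hseq
end
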